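/- Let R₀ = ℂ[x,y]/(xy). The element dx ∧ dy is nonzero in Ω²_{R₀/ℂ} = Λ²_{R₀} Ω¹_{R₀/ℂ}, even though x·(dx ∧ dy) = 0 and y·(dx ∧ dy) = 0. -/

import Mathlib

set_option synthInstance.maxHeartbeats 400000
set_option maxHeartbeats 800000

noncomputable section

open MvPolynomial

/-- The coordinate ring `ℂ[x,y]/(xy)` of the normal crossing divisor. -/
abbrev NCRing : Type :=
  MvPolynomial (Fin 2) ℂ ⧸ Ideal.span {(X 0 * X 1 : MvPolynomial (Fin 2) ℂ)}

/-- The image of `x` in `ℂ[x,y]/(xy)`. -/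
def nx : NCRing := Ideal.Quotient.mk _ (X 0)

/-- The image of `y` in `ℂ[x,y]/(xy)`. -/
def ny : NCRing := Ideal.Quotient.mk _ (X 1)

/-- The element `dx ∧ dy` of the second exterior power `Ω²_{R₀/ℂ} = Λ²_{R₀} Ω¹_{R₀/ℂ}`
(as an element of the exterior algebra, lying in the degree-2 exterior power). -/
def dxdy : ExteriorAlgebra NCRing (KaehlerDifferential ℂ NCRing) :=
  ExteriorAlgebra.ιMulti NCRing 2
    ![KaehlerDifferential.D ℂ NCRing nx, KaehlerDifferential.D ℂ NCRing ny]

namespace StmtAux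

abbrev P : Type := MvPolynomial (Fin 2) ℂ
abbrev II : Ideal P := Ideal.span {(X 0 * X 1 : P)}
abbrev A : Type := DualNumber ℂ

/-- `x ↦ ε`, `y ↦ 0` -/
def fx : P →ₐ[ℂ] A := aeval ![(DualNumber.eps : A), 0]
/-- `x ↦ 0`, `y ↦ ε` -/
def fy : P →ₐ[ℂ] A := aeval ![0, (DualNumber.eps : A)]

lemma fx_vanish : ∀ a ∈ II, fx a = 0 := by
  intro a ha
  rw [Ideal.mem_span_singleton] at ha
  obtain ⟨c, rfl⟩ := ha
  simp [fx]

lemma fy_vanish : ∀ a ∈ II, fy a = 0 := by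
  intro a ha
  rw [Ideal.mem_span_singleton] at ha
  obtain ⟨c, rfl⟩ := ha
  simp [fy]

def dX : NCRing →ₐ[ℂ] A := Ideal.Quotient.liftₐ II fx fx_vanish
def dY : NCRing →ₐ[ℂ] A := Ideal.Quotient.liftₐ II fy fy_vanish

/-- evaluation at the origin -/
def ε : NCRing →ₐ[ℂ] ℂ := (TrivSqZeroExt.fstHom ℂ ℂ ℂ).comp dX

lemma fst_dY_eq : (TrivSqZeroExt.fstHom ℂ ℂ ℂ).comp dY = ε := by
  apply Ideal.Quotient.algHom_ext
  apply MvPolynomial.algHom_ext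
  intro i
  fin_cases i <;>
  · simp only [AlgHom.comp_apply, Ideal.Quotient.mkₐ_eq_mk, dX, dY, ε,
      Ideal.Quotient.liftₐ_apply, Ideal.Quotient.lift_mk, AlgHom.coe_toRingHom]
    simp [fx, fy]

instance : Algebra NCRing ℂ := ε.toRingHom.toAlgebra

lemma algebraMap_eq : (algebraMap NCRing ℂ) = ε.toRingHom := rfl

instance : IsScalarTower ℂ NCRing ℂ :=
  IsScalarTower.of_algebraMap_eq (R := ℂ) (S := NCRing) (A := ℂ) fun c => by
    rw [algebraMap_eq]
    exact (ε.commutes c).symm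

lemma smul_def (a : NCRing) (m : ℂ) : a • m = ε a * m := by
  rw [Algebra.smul_def, algebraMap_eq]; rfl

/-- The derivation `∂/∂x` at the origin. -/
def δx : Derivation ℂ NCRing ℂ where
  toLinearMap := (TrivSqZeroExt.sndHom ℂ ℂ).comp dX.toLinearMap
  map_one_eq_zero' := by simp
  leibniz' a b := by
    simp only [LinearMap.comp_apply, AlgHom.toLinearMap_apply, map_mul,
      TrivSqZeroExt.sndHom_apply, TrivSqZeroExt.snd_mul, smul_def, op_smul_eq_smul]
    simp only [smul_eq_mul, ε, AlgHom.comp_apply, TrivSqZeroExt.fstHom_apply]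

/-- The derivation `∂/∂y` at the origin. -/
def δy : Derivation ℂ NCRing ℂ where
  toLinearMap := (TrivSqZeroExt.sndHom ℂ ℂ).comp dY.toLinearMap
  map_one_eq_zero' := by simp
  leibniz' a b := by
    simp only [LinearMap.comp_apply, AlgHom.toLinearMap_apply, map_mul,
      TrivSqZeroExt.sndHom_apply, TrivSqZeroExt.snd_mul, smul_def, op_smul_eq_smul]
    have h : ∀ c : NCRing, ε c = (dY c).fst := fun c =>
      (DFunLike.congr_fun fst_dY_eq c).symm
    simp only [smul_eq_mul, h]

lemma δx_nx : δx nx = 1 := by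
  simp [δx, nx, dX, Ideal.Quotient.liftₐ_apply, Derivation.mk_coe]
  simp [fx]

lemma δx_ny : δx ny = 0 := by
  simp [δx, ny, dX, Ideal.Quotient.liftₐ_apply, Derivation.mk_coe]
  simp [fx]

lemma δy_nx : δy nx = 0 := by
  simp [δy, nx, dY, Ideal.Quotient.liftₐ_apply, Derivation.mk_coe]
  simp [fy]

lemma δy_ny : δy ny = 1 := by
  simp [δy, ny, dY, Ideal.Quotient.liftₐ_apply, Derivation.mk_coe]
  simp [fy]

def lx : KaehlerDifferential ℂ NCRing →ₗ[NCRing] ℂ := δx.liftKaehlerDifferential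
def ly : KaehlerDifferential ℂ NCRing →ₗ[NCRing] ℂ := δy.liftKaehlerDifferential

/-- The alternating 2-form `ω ∧ η ↦ lx ω · ly η - lx η · ly ω`. -/
def φ : (KaehlerDifferential ℂ NCRing) [⋀^Fin 2]→ₗ[NCRing] ℂ where
  toFun v := lx (v 0) * ly (v 1) - lx (v 1) * ly (v 0)
  map_update_add' := by
    intro dec v i a b
    fin_cases i <;>
      simp [Function.update, Fin.ext_iff] <;> ring
  map_update_smul' := by
    intro dec v i c a
    fin_cases i <;>
      simp [Function.update, Fin.ext_iff, smul_def] <;> ring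
  map_eq_zero_of_eq' := by
    intro v i j hv hij
    fin_cases i <;> fin_cases j <;> simp_all

def fam : ∀ i : ℕ, (KaehlerDifferential ℂ NCRing) [⋀^Fin i]→ₗ[NCRing] ℂ :=
  fun i => match i with
  | 2 => φ
  | _ => 0

def F : ExteriorAlgebra NCRing (KaehlerDifferential ℂ NCRing) →ₗ[NCRing] ℂ :=
  ExteriorAlgebra.liftAlternating fam

lemma F_dxdy : F dxdy = 1 := by
  rw [dxdy, F, ExteriorAlgebra.liftAlternating_apply_ιMulti]
  show φ _ = 1
  simp only [φ, AlternatingMap.coe_mk, MultilinearMap.coe_mk, Matrix.cons_val_zero,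
    Matrix.cons_val_one, Matrix.head_cons]
  rw [lx, ly]
  simp [δx_nx, δx_ny, δy_nx, δy_ny]

end StmtAux

/-- For `R₀ = ℂ[x,y]/(xy)`, the element `dx ∧ dy` lies in
`Ω²_{R₀/ℂ} = Λ²_{R₀} Ω¹_{R₀/ℂ}` and is nonzero there, even though
`x·(dx ∧ dy) = 0` and `y·(dx ∧ dy) = 0`. -/
theorem stmt_6 :
    dxdy ∈ ⋀[NCRing]^2 (KaehlerDifferential ℂ NCRing) ∧
    dxdy ≠ 0 ∧ nx • dxdy = 0 ∧ ny • dxdy = 0 := by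
  have hxy : nx * ny = 0 := by
    rw [nx, ny, ← map_mul]
    exact Ideal.Quotient.eq_zero_iff_mem.2 (Ideal.subset_span rfl)
  set D := KaehlerDifferential.D ℂ NCRing with hD
  have hrel : nx • D ny + ny • D nx = 0 := by
    have := D.leibniz nx ny
    rw [hxy, map_zero] at this
    exact this.symm
  set v : Fin 2 → KaehlerDifferential ℂ NCRing := ![D nx, D ny] with hv
  refine ⟨ExteriorAlgebra.ιMulti_range NCRing 2 (Set.mem_range_self v), ?_, ?_, ?_⟩
  · intro h
    have h1 : StmtAux.F dxdy = 0 := by rw [h, map_zero]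
    rw [StmtAux.F_dxdy] at h1
    exact one_ne_zero h1
  · -- nx • dxdy = 0
    have h1 : nx • dxdy = ExteriorAlgebra.ιMulti NCRing 2
        (Function.update v 1 (nx • D ny)) := by
      rw [dxdy, ← hv, (ExteriorAlgebra.ιMulti NCRing 2).map_update_smul v 1 nx (D ny),
        show Function.update v 1 (D ny) = v from Function.update_eq_self 1 v]
    have h2 : nx • D ny = (-ny) • D nx := by
      linear_combination (norm := module) hrel
    rw [h1, h2, (ExteriorAlgebra.ιMulti NCRing 2).map_update_smul v 1 (-ny) (D nx)]
    rw [(ExteriorAlgebra.ιMulti NCRing 2).map_eq_zero_of_eq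
      (Function.update v 1 (D nx)) (i := 0) (j := 1) (by simp [hv]) (by decide)]
    simp
  · -- ny • dxdy = 0
    have h1 : ny • dxdy = ExteriorAlgebra.ιMulti NCRing 2
        (Function.update v 0 (ny • D nx)) := by
      rw [dxdy, ← hv, (ExteriorAlgebra.ιMulti NCRing 2).map_update_smul v 0 ny (D nx),
        show Function.update v 0 (D nx) = v from Function.update_eq_self 0 v]
    have h2 : ny • D nx = (-nx) • D ny := by
      linear_combination (norm := module) hrel
    rw [h1, h2, (ExteriorAlgebra.ιMulti NCRing 2).map_update_smul v 0 (-nx) (D ny)]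
    rw [(ExteriorAlgebra.ιMulti NCRing 2).map_eq_zero_of_eq
      (Function.update v 0 (D ny)) (i := 0) (j := 1) (by simp [hv]) (by decide)]
    simp
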